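/- Define R(n) = 2 ∫_{0}^{1} (3x² - 2x³)ⁿ dx for nonnegative integers n. Then for every nonnegative integer n, 9(n+1)(2n+1)·R(n) - 2(3n+4)(3n+2)·R(n+1) = 2. -/

import Mathlib

/-!
Creative telescoping. With `p x = 3x² - 2x³`, the Almkvist–Zeilberger certificate
`G_n x = x (3 - 2x) (3(n+1) + (3n+2) x - 2(3n+2) x²) p(x)ⁿ` satisfies
`G_n' = 9(n+1)(2n+1) pⁿ - 2(3n+4)(3n+2) pⁿ⁺¹`, and `G_n 0 = 0`, `G_n 1 = 1`;
integrating over `[0, 1]` gives the recurrence.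
-/

open intervalIntegral

theorem natCast_mul_pow_sub_one_mul {R : Type*} [CommSemiring R] (n : ℕ) (a : R) :
    n * a ^ (n - 1) * a = n * a ^ n := by
  rcases eq_or_ne n 0 with rfl | hn
  · simp
  · rw [mul_assoc, pow_sub_one_mul hn]

def smoothstep (x : ℝ) : ℝ := 3 * x ^ 2 - 2 * x ^ 3

theorem hasDerivAt_smoothstep (x : ℝ) : HasDerivAt smoothstep (6 * x * (1 - x)) x := by
  refine (((hasDerivAt_pow 2 x).const_mul 3).sub ((hasDerivAt_pow 3 x).const_mul 2)).congr_deriv ?_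
  norm_num
  ring

def ruehrCertificate (n : ℕ) (x : ℝ) : ℝ :=
  x * (3 - 2 * x) * (3 * (n + 1) + (3 * n + 2) * x - 2 * (3 * n + 2) * x ^ 2) * smoothstep x ^ n

theorem hasDerivAt_ruehrCertificate (n : ℕ) (x : ℝ) :
    HasDerivAt (ruehrCertificate n)
      (9 * (n + 1) * (2 * n + 1) * smoothstep x ^ n
        - 2 * (3 * n + 4) * (3 * n + 2) * smoothstep x ^ (n + 1)) x := by
  have hx := hasDerivAt_id' x
  have hfactor := (hx.mul ((hx.const_mul 2).const_sub 3)).mul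
    (((hx.const_mul ((3 * n + 2 : ℝ))).const_add (3 * (n + 1) : ℝ)).sub
      ((hasDerivAt_pow 2 x).const_mul (2 * (3 * n + 2) : ℝ)))
  refine (hfactor.mul ((hasDerivAt_smoothstep x).pow n)).congr_deriv ?_
  -- `x (3 - 2x) · smoothstep' x = 6 (1 - x) · smoothstep x`, so the power `n - 1` disappears.
  have hpow : n * smoothstep x ^ (n - 1) * (x * (3 - 2 * x) * (6 * x * (1 - x)))
      = 6 * (1 - x) * (n * smoothstep x ^ n) := by
    rw [← natCast_mul_pow_sub_one_mul]
    unfold smoothstep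
    ring
  simp only [Pi.mul_apply, Pi.sub_apply, Pi.pow_apply]
  have hsmooth : smoothstep x = 3 * x ^ 2 - 2 * x ^ 3 := rfl
  linear_combination (3 * (n + 1) + (3 * n + 2) * x - 2 * (3 * n + 2) * x ^ 2) * hpow
    + 2 * (3 * n + 4) * (3 * n + 2) * smoothstep x ^ n * hsmooth

theorem ruehrCertificate_zero (n : ℕ) : ruehrCertificate n 0 = 0 := by
  simp [ruehrCertificate]

theorem ruehrCertificate_one (n : ℕ) : ruehrCertificate n 1 = 1 := by
  norm_num [ruehrCertificate, smoothstep]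
  ring

theorem integral_smoothstep_pow_recurrence (n : ℕ) :
    9 * ((n : ℝ) + 1) * (2 * n + 1) * (∫ x in (0 : ℝ)..1, smoothstep x ^ n)
      - 2 * (3 * (n : ℝ) + 4) * (3 * n + 2) * (∫ x in (0 : ℝ)..1, smoothstep x ^ (n + 1)) = 1 := by
  have hint (k : ℕ) : IntervalIntegrable (fun x => smoothstep x ^ k) MeasureTheory.volume 0 1 := by
    apply Continuous.intervalIntegrable
    unfold smoothstep
    fun_prop
  rw [← integral_const_mul, ← integral_const_mul,
    ← integral_sub ((hint n).const_mul _) ((hint (n + 1)).const_mul _),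
    integral_eq_sub_of_hasDerivAt (fun x _ => hasDerivAt_ruehrCertificate n x)
      (((hint n).const_mul _).sub ((hint (n + 1)).const_mul _)),
    ruehrCertificate_zero, ruehrCertificate_one, sub_zero]

theorem ruehr_R_recurrence (R : ℕ → ℝ)
    (hR : ∀ n : ℕ, R n = 2 * ∫ x in (0 : ℝ)..(1 : ℝ), (3 * x ^ 2 - 2 * x ^ 3) ^ n) :
    ∀ n : ℕ, 9 * ((n : ℝ) + 1) * (2 * (n : ℝ) + 1) * R n
      - 2 * (3 * (n : ℝ) + 4) * (3 * (n : ℝ) + 2) * R (n + 1) = 2 := by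
  intro n
  have h := integral_smoothstep_pow_recurrence n
  unfold smoothstep at h
  rw [hR, hR]
  linarith
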